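/- For the N-dimensional torus T(N) of diagonal unitary matrices with Haar measure, the limit as N → ∞ of the expected nearest neighbor counting measure μ(naive, T(N), 0) exists and equals the exponential distribution: for every p ≥ 0, lim_{N→∞} ∫_0^p dμ(naive, T(N), 0) = 1 − e^{−p}. -/

import Mathlib

open MeasureTheory
open scoped ENNReal

/-- The naive nearest neighbor counting measure of the sorted angle tuple
`x 0 ≤ … ≤ x (N-1)` in `[0,2π)`: mass `1/N` at each rescaled consecutive gap
`(N/2π)(x_{j+1} - x_j)`, `j = 1,…,N-1` (no wrap-around). -/
noncomputable def naiveNN (N : ℕ) (x : ℕ → ℝ) : Measure ℝ :=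
  (N : ℝ≥0∞)⁻¹ • ∑ j ∈ Finset.range (N - 1),
    Measure.dirac (((N : ℝ) / (2 * Real.pi)) * (x (j + 1) - x j))

/-- The non-decreasing rearrangement of a finite tuple, as a function on `ℕ`. -/
noncomputable def sortTuple (N : ℕ) (φ : Fin N → ℝ) : ℕ → ℝ :=
  fun j => if h : j < N then (φ ∘ Tuple.sort φ) ⟨j, h⟩ else 0

/-- The Haar probability measure on the torus `T(N)` of diagonal unitary matrices,
realized as normalized Lebesgue measure on the cube of angle vectors `[0,2π)^N`. -/
noncomputable def haarTN (N : ℕ) : Measure (Fin N → ℝ) :=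
  (ENNReal.ofReal ((2 * Real.pi) ^ N))⁻¹ •
    volume.restrict (Set.univ.pi fun _ => Set.Ico (0 : ℝ) (2 * Real.pi))

noncomputable def nuM : Measure ℝ :=
  (ENNReal.ofReal (2 * Real.pi))⁻¹ • volume.restrict (Set.Ico (0 : ℝ) (2 * Real.pi))

lemma twopi_pos : (0:ℝ) < 2 * Real.pi := by positivity

lemma nuM_apply (t : Set ℝ) :
    nuM t = (ENNReal.ofReal (2 * Real.pi))⁻¹ * volume (t ∩ Set.Ico 0 (2 * Real.pi)) := by
  rw [nuM, Measure.smul_apply, Measure.restrict_apply' measurableSet_Ico, smul_eq_mul]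

instance : IsProbabilityMeasure nuM := by
  constructor
  rw [nuM_apply, Set.univ_inter, Real.volume_Ico, sub_zero,
    ENNReal.inv_mul_cancel (ne_of_gt (ENNReal.ofReal_pos.2 twopi_pos)) ENNReal.ofReal_ne_top]

instance : NullSingletonClass nuM := by
  constructor
  intro x
  rw [nuM_apply]
  have : volume ({x} ∩ Set.Ico (0:ℝ) (2 * Real.pi)) = 0 :=
    measure_mono_null Set.inter_subset_left (measure_singleton x)
  rw [this, mul_zero]

lemma haarTN_eq_pi (N : ℕ) : haarTN N = Measure.pi fun _ : Fin N => nuM := by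
  refine (Measure.pi_eq fun s hs => ?_).symm
  rw [haarTN, Measure.smul_apply,
    Measure.restrict_apply' (MeasurableSet.univ_pi fun _ => measurableSet_Ico),
    ← Set.pi_inter_distrib, volume_pi_pi, smul_eq_mul]
  have : (ENNReal.ofReal ((2 * Real.pi) ^ N))⁻¹
      = ∏ _i : Fin N, (ENNReal.ofReal (2 * Real.pi))⁻¹ := by
    rw [Finset.prod_const, ENNReal.ofReal_pow twopi_pos.le, ← ENNReal.inv_pow, Finset.card_univ,
      Fintype.card_fin]
  rw [this, ← Finset.prod_mul_distrib]
  exact Finset.prod_congr rfl fun i _ => (nuM_apply (s i)).symm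

instance haarTN_prob (N : ℕ) : IsProbabilityMeasure (haarTN N) := by
  rw [haarTN_eq_pi]; infer_instance

noncomputable def hfun (s x : ℝ) : ℝ :=
  (2 * Real.pi - min (x + s) (2 * Real.pi) + x) / (2 * Real.pi)

lemma hfun_cont (s : ℝ) : Continuous (hfun s) := by
  unfold hfun; fun_prop

lemma hfun_nonneg {s x : ℝ} (hx : x ∈ Set.Ico (0:ℝ) (2 * Real.pi)) : 0 ≤ hfun s x := by
  have h1 : min (x + s) (2 * Real.pi) ≤ 2 * Real.pi := min_le_right _ _
  have := hx.1
  unfold hfun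
  apply div_nonneg (by linarith) twopi_pos.le

lemma hfun_le_one {s : ℝ} (hs : 0 ≤ s) {x : ℝ} (hx : x ∈ Set.Ico (0:ℝ) (2 * Real.pi)) :
    hfun s x ≤ 1 := by
  have h1 : x ≤ min (x + s) (2 * Real.pi) := le_min (by linarith) hx.2.le
  rw [hfun, div_le_one twopi_pos]
  linarith

lemma nuM_Ioc_compl {s : ℝ} (hs : 0 ≤ s) {x : ℝ} (hx : x ∈ Set.Ico (0:ℝ) (2 * Real.pi)) :
    nuM ((Set.Ioc x (x + s))ᶜ) = ENNReal.ofReal (hfun s x) := by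
  have hset : (Set.Ioc x (x + s))ᶜ ∩ Set.Ico 0 (2 * Real.pi)
      = Set.Icc 0 x ∪ Set.Ioo (min (x + s) (2 * Real.pi)) (2 * Real.pi) := by
    ext y
    simp only [Set.mem_inter_iff, Set.mem_compl_iff, Set.mem_Ioc, Set.mem_Ico, Set.mem_union,
      Set.mem_Icc, Set.mem_Ioo, lt_min_iff, not_and, not_le, min_lt_iff]
    constructor
    · rintro ⟨h1, h2, h3⟩
      rcases le_or_gt y x with h | h
      · exact Or.inl ⟨h2, h⟩
      · exact Or.inr ⟨Or.inl (h1 h), h3⟩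
    · rintro (⟨h1, h2⟩ | ⟨h1, h2⟩)
      · exact ⟨fun hc => absurd hc (not_lt.2 h2), h1, hx.2.trans_le' h2⟩
      · rcases h1 with h1 | h1
        · exact ⟨fun _ => h1, by linarith [hx.1], h2⟩
        · exact absurd h2 (not_lt.2 h1.le)
  have hdisj : Disjoint (Set.Icc (0:ℝ) x) (Set.Ioo (min (x + s) (2 * Real.pi)) (2 * Real.pi)) := by
    apply Set.disjoint_left.2
    rintro y ⟨_, h2⟩ ⟨h3, _⟩
    have : x ≤ min (x + s) (2 * Real.pi) := le_min (by linarith) hx.2.le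
    linarith
  rw [nuM_apply, hset, measure_union hdisj measurableSet_Ioo, Real.volume_Icc, Real.volume_Ioo,
    sub_zero, ← ENNReal.ofReal_add (hx.1) (by simp), hfun, ENNReal.ofReal_div_of_pos twopi_pos]
  rw [ENNReal.div_eq_inv_mul]
  congr 1
  congr 1
  ring

lemma real_integral_hfun (M : ℕ) {s : ℝ} (hs0 : 0 ≤ s) (hs2 : s ≤ 2 * Real.pi) :
    ∫ x in Set.Ico (0:ℝ) (2 * Real.pi), hfun s x ^ M
      = (2 * Real.pi - s) * ((2 * Real.pi - s) / (2 * Real.pi)) ^ M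
        + ((2 * Real.pi) ^ (M + 1) - (2 * Real.pi - s) ^ (M + 1)) / ((M + 1) * (2 * Real.pi) ^ M) := by
  set a : ℝ := 2 * Real.pi - s with ha
  have ha0 : 0 ≤ a := by linarith
  have ha2 : a ≤ 2 * Real.pi := by linarith
  have hcont : Continuous fun x => hfun s x ^ M := (hfun_cont s).pow M
  rw [setIntegral_congr_set Ico_ae_eq_Ioc, ← intervalIntegral.integral_of_le twopi_pos.le,
    ← intervalIntegral.integral_add_adjacent_intervals
      (hcont.intervalIntegrable 0 a) (hcont.intervalIntegrable a (2 * Real.pi))]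
  have h1 : ∫ x in (0:ℝ)..a, hfun s x ^ M = a * (a / (2 * Real.pi)) ^ M := by
    rw [intervalIntegral.integral_congr (g := fun _ => (a / (2 * Real.pi)) ^ M)]
    · rw [intervalIntegral.integral_const, smul_eq_mul, sub_zero]
    · intro x hx
      rw [Set.uIcc_of_le ha0] at hx
      have hmin : min (x + s) (2 * Real.pi) = x + s := min_eq_left (by linarith [hx.2])
      simp only [hfun, hmin]
      rw [ha]; ring
  have h2 : ∫ x in a..(2 * Real.pi), hfun s x ^ M
      = (((2 * Real.pi) ^ M)⁻¹) * (((2 * Real.pi) ^ (M + 1) - a ^ (M + 1)) / (M + 1)) := by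
    rw [intervalIntegral.integral_congr (g := fun x => ((2 * Real.pi) ^ M)⁻¹ * x ^ M)]
    · rw [intervalIntegral.integral_const_mul, integral_pow]
    · intro x hx
      rw [Set.uIcc_of_le ha2] at hx
      have hmin : min (x + s) (2 * Real.pi) = 2 * Real.pi := min_eq_right (by linarith [hx.1])
      simp only [hfun, hmin]
      rw [sub_self, zero_add, div_pow, ← inv_mul_eq_div]
  have hpi : (2 * Real.pi) ≠ 0 := twopi_pos.ne'
  have hM : ((M:ℝ) + 1) ≠ 0 := by positivity
  rw [h1, h2]
  field_simp

noncomputable def gval (N : ℕ) (s : ℝ) : ℝ :=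
  (1 - s / (2 * Real.pi)) ^ N + (1 - (1 - s / (2 * Real.pi)) ^ N) / N

lemma lintegral_hfun (M : ℕ) {s : ℝ} (hs0 : 0 ≤ s) (hs2 : s ≤ 2 * Real.pi) :
    ∫⁻ x, (ENNReal.ofReal (hfun s x)) ^ M ∂nuM = ENNReal.ofReal (gval (M + 1) s) := by
  have hint : Integrable (fun x => hfun s x ^ M)
      (volume.restrict (Set.Ico (0:ℝ) (2 * Real.pi))) :=
    (((hfun_cont s).pow M).integrableOn_Icc).mono_set Set.Ico_subset_Icc_self
  have hae : 0 ≤ᶠ[ae (volume.restrict (Set.Ico (0:ℝ) (2 * Real.pi)))]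
      fun x => hfun s x ^ M :=
    (ae_restrict_iff' measurableSet_Ico).2 (ae_of_all _ fun x hx => pow_nonneg (hfun_nonneg hx) M)
  rw [nuM, lintegral_smul_measure,
    setLIntegral_congr_fun measurableSet_Ico
      (fun x hx => (ENNReal.ofReal_pow (hfun_nonneg (s := s) hx) M).symm),
    ← ofReal_integral_eq_lintegral_ofReal hint hae, real_integral_hfun M hs0 hs2,
    smul_eq_mul, ← ENNReal.div_eq_inv_mul, ← ENNReal.ofReal_div_of_pos twopi_pos]
  congr 1
  have hpi : (2 * Real.pi) ≠ 0 := twopi_pos.ne'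
  have hM : ((M:ℝ) + 1) ≠ 0 := by positivity
  rw [gval]
  push_cast
  rw [show (1:ℝ) - s / (2 * Real.pi) = (2 * Real.pi - s) / (2 * Real.pi) by field_simp]
  simp only [div_pow]
  field_simp
  ring

def Eset (N : ℕ) (s : ℝ) (i : Fin N) : Set (Fin N → ℝ) :=
  {φ | ∃ k, φ i < φ k ∧ φ k ≤ φ i + s}

lemma measurableSet_Eset (N : ℕ) (s : ℝ) (i : Fin N) : MeasurableSet (Eset N s i) := by
  have : Eset N s i = ⋃ k, ({φ : Fin N → ℝ | φ i < φ k} ∩ {φ | φ k ≤ φ i + s}) := by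
    ext φ; simp [Eset, Set.mem_iUnion, Set.mem_inter_iff, Set.mem_setOf_eq]
  rw [this]
  exact MeasurableSet.iUnion fun k =>
    (measurableSet_lt (measurable_pi_apply i) (measurable_pi_apply k)).inter
      (measurableSet_le (measurable_pi_apply k) (by fun_prop))

lemma haar_Eset_compl (M : ℕ) (i : Fin (M + 1)) {s : ℝ} (hs0 : 0 ≤ s) (hs2 : s ≤ 2 * Real.pi) :
    haarTN (M + 1) ((Eset (M + 1) s i)ᶜ) = ENNReal.ofReal (gval (M + 1) s) := by
  rw [haarTN_eq_pi]
  have mp := (measurePreserving_piFinSuccAbove (fun _ : Fin (M + 1) => nuM) i).symm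
  have hES := measurableSet_Eset (M + 1) s i
  rw [← mp.measure_preimage hES.compl.nullMeasurableSet]
  have key : ∀ (x : ℝ) (y : Fin M → ℝ),
      (i.insertNth x y ∈ Eset (M + 1) s i ↔ ∃ j, x < y j ∧ y j ≤ x + s) := by
    intro x y
    simp only [Eset, Set.mem_setOf_eq, Fin.insertNth_apply_same]
    constructor
    · rintro ⟨k, h1, h2⟩
      rcases eq_or_ne k i with rfl | hk
      · rw [Fin.insertNth_apply_same] at h1; exact absurd h1 (lt_irrefl x)
      · obtain ⟨j, rfl⟩ := Fin.exists_succAbove_eq hk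
        rw [Fin.insertNth_apply_succAbove] at h1 h2
        exact ⟨j, h1, h2⟩
    · rintro ⟨j, h1, h2⟩
      refine ⟨i.succAbove j, ?_, ?_⟩ <;> rw [Fin.insertNth_apply_succAbove]
      exacts [h1, h2]
  have hpre : (MeasurableEquiv.piFinSuccAbove (fun _ : Fin (M + 1) => ℝ) i).symm ⁻¹'
        (Eset (M + 1) s i)ᶜ
      = {z : ℝ × (Fin M → ℝ) | ∃ j, z.1 < z.2 j ∧ z.2 j ≤ z.1 + s}ᶜ := by
    ext ⟨x, y⟩
    simp only [Set.preimage_compl, Set.mem_compl_iff, Set.mem_preimage,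
      MeasurableEquiv.piFinSuccAbove_symm_apply, Set.mem_setOf_eq]
    exact not_iff_not.2 (key x y)
  rw [hpre]
  have hS : MeasurableSet {z : ℝ × (Fin M → ℝ) | ∃ j, z.1 < z.2 j ∧ z.2 j ≤ z.1 + s} := by
    have : {z : ℝ × (Fin M → ℝ) | ∃ j, z.1 < z.2 j ∧ z.2 j ≤ z.1 + s}
        = ⋃ j, ({z : ℝ × (Fin M → ℝ) | z.1 < z.2 j} ∩ {z | z.2 j ≤ z.1 + s}) := by
      ext z; simp [Set.mem_iUnion, Set.mem_inter_iff, Set.mem_setOf_eq]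
    rw [this]
    refine MeasurableSet.iUnion fun j => MeasurableSet.inter ?_ ?_
    · exact measurableSet_lt measurable_fst (measurable_snd.eval)
    · exact measurableSet_le measurable_snd.eval (measurable_fst.add_const s)
  rw [Measure.prod_apply hS.compl]
  have hfiber : ∀ x : ℝ, (Prod.mk x ⁻¹'
        {z : ℝ × (Fin M → ℝ) | ∃ j, z.1 < z.2 j ∧ z.2 j ≤ z.1 + s}ᶜ)
      = Set.pi Set.univ (fun _ : Fin M => (Set.Ioc x (x + s))ᶜ) := by
    intro x
    ext y
    simp only [Set.mem_preimage, Set.mem_compl_iff, Set.mem_setOf_eq, Set.mem_pi, Set.mem_univ,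
      forall_true_left, Set.mem_Ioc, not_exists, not_and, not_le, true_implies]
  have hval : ∀ x : ℝ,
      (Measure.pi fun _ : Fin M => nuM) (Prod.mk x ⁻¹'
        {z : ℝ × (Fin M → ℝ) | ∃ j, z.1 < z.2 j ∧ z.2 j ≤ z.1 + s}ᶜ)
      = (nuM ((Set.Ioc x (x + s))ᶜ)) ^ M := by
    intro x
    rw [hfiber x, Measure.pi_pi, Finset.prod_const, Finset.card_univ, Fintype.card_fin]
  rw [lintegral_congr fun x => hval x]
  have hmem : ∀ᵐ x ∂nuM, x ∈ Set.Ico (0:ℝ) (2 * Real.pi) := by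
    rw [nuM]
    exact Measure.ae_smul_measure (ae_restrict_mem measurableSet_Ico) _
  rw [lintegral_congr_ae (hmem.mono fun x hx => by rw [nuM_Ioc_compl hs0 hx])]
  exact lintegral_hfun M hs0 hs2

lemma gval_nonneg {N : ℕ} {s : ℝ} (hs0 : 0 ≤ s) (hs2 : s ≤ 2 * Real.pi) :
    0 ≤ gval N s := by
  have ht0 : 0 ≤ 1 - s / (2 * Real.pi) := by
    rw [sub_nonneg, div_le_one twopi_pos]; exact hs2
  have ht1 : 1 - s / (2 * Real.pi) ≤ 1 := by
    have : 0 ≤ s / (2 * Real.pi) := div_nonneg hs0 twopi_pos.le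
    linarith
  have h1 : (1 - s / (2 * Real.pi)) ^ N ≤ 1 := pow_le_one₀ ht0 ht1
  have h0 : 0 ≤ (1 - s / (2 * Real.pi)) ^ N := pow_nonneg ht0 N
  have h2 : 0 ≤ (1 - (1 - s / (2 * Real.pi)) ^ N) / N :=
    div_nonneg (by linarith) (Nat.cast_nonneg N)
  rw [gval]
  linarith

lemma gval_le_one {N : ℕ} (hN : 1 ≤ N) {s : ℝ} (hs0 : 0 ≤ s) (hs2 : s ≤ 2 * Real.pi) :
    gval N s ≤ 1 := by
  have ht0 : 0 ≤ 1 - s / (2 * Real.pi) := by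
    rw [sub_nonneg, div_le_one twopi_pos]; exact hs2
  have ht1 : 1 - s / (2 * Real.pi) ≤ 1 := by
    have : 0 ≤ s / (2 * Real.pi) := div_nonneg hs0 twopi_pos.le
    linarith
  have h1 : (1 - s / (2 * Real.pi)) ^ N ≤ 1 := pow_le_one₀ ht0 ht1
  have h0 : 0 ≤ (1 - s / (2 * Real.pi)) ^ N := pow_nonneg ht0 N
  have hNpos : (1:ℝ) ≤ N := by exact_mod_cast hN
  have hdiv : (1 - (1 - s / (2 * Real.pi)) ^ N) / N ≤ 1 - (1 - s / (2 * Real.pi)) ^ N :=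
    div_le_self (by linarith) hNpos
  rw [gval]
  linarith

lemma haar_Eset_toReal (M : ℕ) (i : Fin (M + 1)) {s : ℝ} (hs0 : 0 ≤ s) (hs2 : s ≤ 2 * Real.pi) :
    ((haarTN (M + 1)) (Eset (M + 1) s i)).toReal = 1 - gval (M + 1) s := by
  have hc := haar_Eset_compl M i hs0 hs2
  have h1 : haarTN (M + 1) (Eset (M + 1) s i)
      = 1 - ENNReal.ofReal (gval (M + 1) s) := by
    rw [← compl_compl (Eset (M + 1) s i),
      prob_compl_eq_one_sub (measurableSet_Eset (M + 1) s i).compl, hc]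
  rw [h1, ENNReal.toReal_sub_of_le (ENNReal.ofReal_le_one.2
      (gval_le_one (Nat.le_add_left 1 M) hs0 hs2)) ENNReal.one_ne_top,
    ENNReal.toReal_one, ENNReal.toReal_ofReal (gval_nonneg hs0 hs2)]

open scoped Classical in

lemma count_sorted_eq {N : ℕ} (φ : Fin N → ℝ) (hφ : Function.Injective φ) (s : ℝ) :
    ((Finset.range (N - 1)).filter
        (fun j => sortTuple N φ (j + 1) - sortTuple N φ j ≤ s)).card
      = (Finset.univ.filter (fun i : Fin N => φ ∈ Eset N s i)).card := by
  set σ := Tuple.sort φ with hσ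
  have hmono : StrictMono (φ ∘ σ) :=
    (Tuple.monotone_sort φ).strictMono_of_injective (hφ.comp σ.injective)
  have hst : ∀ (j : ℕ) (h : j < N), sortTuple N φ j = φ (σ ⟨j, h⟩) := fun j h => dif_pos h
  refine Finset.card_bij (fun j hj => σ ⟨j, by
      have := Finset.mem_range.1 (Finset.mem_filter.1 hj).1; omega⟩) ?_ ?_ ?_
  · intro j hj
    obtain ⟨hr, hcond⟩ := Finset.mem_filter.1 hj
    have hj1 : j < N - 1 := Finset.mem_range.1 hr
    have hjN : j < N := by omega
    have hj1N : j + 1 < N := by omega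
    rw [hst j hjN, hst (j + 1) hj1N] at hcond
    refine Finset.mem_filter.2 ⟨Finset.mem_univ _, ⟨σ ⟨j + 1, hj1N⟩, ?_, ?_⟩⟩
    · exact hmono (show (⟨j, hjN⟩ : Fin N) < ⟨j + 1, hj1N⟩ from by simp [Fin.lt_def])
    · linarith
  · intro j1 h1 j2 h2 heq
    have := σ.injective heq
    simpa using congrArg Fin.val this
  · intro i hi
    obtain ⟨k, hk1, hk2⟩ := (Finset.mem_filter.1 hi).2
    set j' := σ.symm i with hj'
    set k' := σ.symm k with hk'
    have hφi : φ (σ j') = φ i := by rw [hj', Equiv.apply_symm_apply]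
    have hφk : φ (σ k') = φ k := by rw [hk', Equiv.apply_symm_apply]
    have hlt : j' < k' := hmono.lt_iff_lt.1 (by
      show φ (σ j') < φ (σ k'); rw [hφi, hφk]; exact hk1)
    have hjr : (j' : ℕ) < N - 1 := by
      have h1 : (j' : ℕ) < (k' : ℕ) := hlt
      have h2 : (k' : ℕ) < N := k'.isLt
      omega
    have hjN : (j' : ℕ) < N := by omega
    have hj1N : (j' : ℕ) + 1 < N := by omega
    refine ⟨(j' : ℕ), Finset.mem_filter.2 ⟨Finset.mem_range.2 hjr, ?_⟩, ?_⟩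
    · rw [hst _ hjN, hst _ hj1N]
      have hle : φ (σ ⟨(j' : ℕ) + 1, hj1N⟩) ≤ φ (σ k') := by
        apply (Tuple.monotone_sort φ)
        show ((⟨(j' : ℕ) + 1, hj1N⟩ : Fin N) : ℕ) ≤ (k' : ℕ)
        have h1 : (j' : ℕ) < (k' : ℕ) := hlt
        simpa using h1
      have heta : φ (σ ⟨(j' : ℕ), hjN⟩) = φ i := by
        rw [show (⟨(j' : ℕ), hjN⟩ : Fin N) = j' from Fin.eta _ _, hφi]
      rw [heta]
      rw [hφk] at hle
      linarith
    · show σ ⟨(j' : ℕ), hjN⟩ = i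
      rw [show (⟨(j' : ℕ), hjN⟩ : Fin N) = j' from Fin.eta _ _, hj']
      exact σ.apply_symm_apply i

open scoped Classical in

lemma naive_apply (N : ℕ) (x : ℕ → ℝ) (p : ℝ) :
    ((naiveNN N x) (Set.Iic p)).toReal
      = (N : ℝ)⁻¹ * ((Finset.range (N - 1)).filter
          (fun j => ((N : ℝ) / (2 * Real.pi)) * (x (j + 1) - x j) ≤ p)).card := by
  rw [naiveNN, Measure.smul_apply, Measure.finset_sum_apply, smul_eq_mul]
  have hsum : ∀ j ∈ Finset.range (N - 1),
      Measure.dirac (((N : ℝ) / (2 * Real.pi)) * (x (j + 1) - x j)) (Set.Iic p)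
        = if ((N : ℝ) / (2 * Real.pi)) * (x (j + 1) - x j) ≤ p then 1 else 0 := by
    intro j _
    rw [Measure.dirac_apply' _ measurableSet_Iic]
    simp [Set.indicator_apply, Set.mem_Iic]
  rw [Finset.sum_congr rfl hsum, Finset.sum_boole, ENNReal.toReal_mul]
  simp [ENNReal.toReal_inv]

lemma ae_injective (M : ℕ) :
    ∀ᵐ φ ∂(haarTN (M + 1)), Function.Injective φ := by
  rw [haarTN_eq_pi]
  have hpair : ∀ i k : Fin (M + 1), i ≠ k →
      (Measure.pi fun _ : Fin (M + 1) => nuM) {φ | φ i = φ k} = 0 := by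
    intro i k hik
    have hmeas : MeasurableSet {φ : Fin (M + 1) → ℝ | φ i = φ k} :=
      measurableSet_eq_fun (measurable_pi_apply i) (measurable_pi_apply k)
    have mp := (measurePreserving_piFinSuccAbove (fun _ : Fin (M + 1) => nuM) i).symm
    rw [← mp.measure_preimage hmeas.nullMeasurableSet]
    obtain ⟨j, hj⟩ := Fin.exists_succAbove_eq hik.symm
    have hpre : (MeasurableEquiv.piFinSuccAbove (fun _ : Fin (M + 1) => ℝ) i).symm ⁻¹'
          {φ | φ i = φ k} = {z : ℝ × (Fin M → ℝ) | z.1 = z.2 j} := by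
      ext ⟨x, y⟩
      simp only [Set.mem_preimage, MeasurableEquiv.piFinSuccAbove_symm_apply,
        Set.mem_setOf_eq]
      rw [show ((Fin.insertNthEquiv (fun _ : Fin (M + 1) => ℝ) i) (x, y) : Fin (M + 1) → ℝ)
          = i.insertNth x y from rfl, Fin.insertNth_apply_same, ← hj,
        Fin.insertNth_apply_succAbove]
    rw [hpre]
    have hmeas' : MeasurableSet {z : ℝ × (Fin M → ℝ) | z.1 = z.2 j} :=
      measurableSet_eq_fun measurable_fst measurable_snd.eval
    have hz : ∀ x : ℝ, (Measure.pi fun _ : Fin M => nuM) {y : Fin M → ℝ | x = y j} = 0 := by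
      intro x
      have he : {y : Fin M → ℝ | x = y j} = {y : Fin M → ℝ | y j = x} := by
        ext y; exact eq_comm
      rw [he]
      exact Measure.pi_hyperplane (fun _ : Fin M => nuM) j x
    rw [Measure.prod_apply hmeas']
    simp only [Set.preimage_setOf_eq]
    rw [lintegral_congr fun x => hz x, lintegral_zero]
  rw [ae_iff]
  have hzero : (Measure.pi fun _ : Fin (M + 1) => nuM)
      (⋃ i, ⋃ k, ⋃ (_ : i ≠ k), {φ : Fin (M + 1) → ℝ | φ i = φ k}) = 0 :=
    measure_iUnion_null fun i => measure_iUnion_null fun k =>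
      measure_iUnion_null fun h => hpair i k h
  refine measure_mono_null ?_ hzero
  intro φ hφ
  simp only [Set.mem_setOf_eq] at hφ
  obtain ⟨a, b, hab, hne⟩ := Function.not_injective_iff.1 hφ
  simp only [Set.mem_iUnion]
  exact ⟨a, b, hne, hab⟩

open scoped Classical in

lemma integral_eq (M : ℕ) {p : ℝ} (hp0 : 0 ≤ p) (hpN : p ≤ ((M + 1 : ℕ) : ℝ)) :
    ∫ φ, ((naiveNN (M + 1) (sortTuple (M + 1) φ)) (Set.Iic p)).toReal ∂(haarTN (M + 1))
      = 1 - gval (M + 1) (2 * Real.pi * p / (M + 1 : ℕ)) := by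
  set N : ℕ := M + 1 with hNdef
  set s : ℝ := 2 * Real.pi * p / (N : ℝ) with hsdef
  have hNpos : (0 : ℝ) < (N : ℝ) := by positivity
  have hs0 : 0 ≤ s := by positivity
  have hs2 : s ≤ 2 * Real.pi := by
    rw [hsdef, div_le_iff₀ hNpos]
    nlinarith [twopi_pos]
  have hc : (0 : ℝ) < (N : ℝ) / (2 * Real.pi) := div_pos hNpos twopi_pos
  have hps : p / ((N : ℝ) / (2 * Real.pi)) = s := by
    rw [div_div_eq_mul_div, hsdef]
    ring
  have hae : ∀ᵐ φ ∂(haarTN N),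
      ((naiveNN N (sortTuple N φ)) (Set.Iic p)).toReal
        = (N : ℝ)⁻¹ * ∑ i : Fin N, Set.indicator (Eset N s i) (fun _ => (1:ℝ)) φ := by
    filter_upwards [ae_injective M] with φ hφ
    rw [naive_apply N (sortTuple N φ) p]
    congr 1
    have hfe : (Finset.range (N - 1)).filter
          (fun j => ((N : ℝ) / (2 * Real.pi)) * (sortTuple N φ (j + 1) - sortTuple N φ j) ≤ p)
        = (Finset.range (N - 1)).filter
          (fun j => sortTuple N φ (j + 1) - sortTuple N φ j ≤ s) := by
      apply Finset.filter_congr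
      intro j _
      rw [mul_comm, ← le_div_iff₀ hc, hps]
    rw [hfe, count_sorted_eq φ hφ s, ← Finset.sum_boole]
    rw [Finset.sum_congr rfl fun i _ => (Set.indicator_apply (Eset N s i) (fun _ => (1:ℝ)) φ)]
  rw [integral_congr_ae hae, integral_const_mul, integral_finset_sum _
    (fun i _ => (integrable_const (1:ℝ)).indicator (measurableSet_Eset N s i))]
  have hval : ∀ i : Fin N, ∫ φ, Set.indicator (Eset N s i) (fun _ => (1:ℝ)) φ ∂(haarTN N)
      = 1 - gval N s := by
    intro i
    rw [show (fun _ : Fin N → ℝ => (1:ℝ)) = (1 : (Fin N → ℝ) → ℝ) from rfl,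
      integral_indicator_one (measurableSet_Eset N s i)]
    exact haar_Eset_toReal M i hs0 hs2
  rw [Finset.sum_congr rfl fun i _ => hval i, Finset.sum_const, Finset.card_univ,
    Fintype.card_fin, nsmul_eq_mul, ← mul_assoc, inv_mul_cancel₀ hNpos.ne', one_mul]

/-- **The Poisson limit of the averaged naive spacing measure on `T(N)`.**
For the `N`-dimensional torus `T(N)` of diagonal unitary matrices with Haar measure, the
expected nearest neighbor counting measure `μ(naive, T(N), 0)` converges, as `N → ∞`, to
the exponential distribution: for every `p ≥ 0`,
`lim_{N→∞} ∫_0^p dμ(naive, T(N), 0) = 1 - e^{-p}`. -/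
theorem naive_limit_poisson :
    ∀ p : ℝ, 0 ≤ p →
      Filter.Tendsto
        (fun N : ℕ => ∫ φ, ((naiveNN N (sortTuple N φ)) (Set.Iic p)).toReal ∂(haarTN N))
        Filter.atTop (nhds (1 - Real.exp (-p))) := by
  intro p hp
  have hgv : ∀ N : ℕ, gval N (2 * Real.pi * p / (N : ℝ))
      = (1 - p / N) ^ N + (1 - (1 - p / N) ^ N) * (1 / N) := by
    intro N
    have hq : 2 * Real.pi * p / (N : ℝ) / (2 * Real.pi) = p / N := by
      rw [div_div, mul_comm ((N : ℝ)) (2 * Real.pi), mul_div_mul_left _ _ twopi_pos.ne']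
    rw [gval, hq]
    ring
  have h1 : Filter.Tendsto (fun N : ℕ => (1 - p / (N : ℝ)) ^ N)
      Filter.atTop (nhds (Real.exp (-p))) := by
    have := Real.tendsto_one_add_div_pow_exp (-p)
    simpa [sub_eq_add_neg, neg_div] using this
  have h2 : Filter.Tendsto (fun N : ℕ => (1 : ℝ) / N) Filter.atTop (nhds 0) :=
    tendsto_one_div_atTop_nhds_zero_nat
  have hF : Filter.Tendsto
      (fun N : ℕ => 1 - ((1 - p / N) ^ N + (1 - (1 - p / N) ^ N) * (1 / N)))
      Filter.atTop (nhds (1 - Real.exp (-p))) := by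
    have hconst : Filter.Tendsto (fun _ : ℕ => (1:ℝ)) Filter.atTop (nhds 1) :=
      tendsto_const_nhds
    have hmain := Filter.Tendsto.sub hconst
      (h1.add ((Filter.Tendsto.sub hconst h1).mul h2))
    simpa using hmain
  refine hF.congr' ?_
  rw [Filter.eventuallyEq_iff_exists_mem]
  refine ⟨{N | max 1 (Nat.ceil p) ≤ N}, Filter.mem_atTop _, ?_⟩
  intro N hN
  simp only [Set.mem_setOf_eq, max_le_iff] at hN
  obtain ⟨hN1, hNp⟩ := hN
  obtain ⟨M, rfl⟩ : ∃ M, N = M + 1 := ⟨N - 1, by omega⟩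
  have hpN : p ≤ ((M + 1 : ℕ) : ℝ) := (Nat.le_ceil p).trans (by exact_mod_cast hNp)
  show 1 - ((1 - p / ((M + 1 : ℕ) : ℝ)) ^ (M + 1)
        + (1 - (1 - p / ((M + 1 : ℕ) : ℝ)) ^ (M + 1)) * (1 / ((M + 1 : ℕ) : ℝ)))
      = ∫ φ, ((naiveNN (M + 1) (sortTuple (M + 1) φ)) (Set.Iic p)).toReal ∂(haarTN (M + 1))
  rw [integral_eq M hp hpN, hgv]
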